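/- arXiv:2409.08604 — 2 statements merged into one kernel-verified Lean document; each statement's English description precedes it below -/
import Mathlib

section
/- For any prime p and nonnegative integers i, j, the quotient (p^i·j)! / (j!·(p^i!)^j) is an integer congruent to 1 modulo p. -/
/-!
Write `q = p ^ i`. The quotient is the uniform Bell number, which factors as
`∏_{t < j} C((t + 1) q - 1, q - 1)`. In base `p`, `q - 1` is `i` digits `p - 1` and
`(t + 1) q - 1` ends in the same `i` digits, so by Lucas's theorem every factor is `≡ 1 [MOD p]`.
-/

namespace Nat

theorem mul_sub_one_mod_self {a : ℕ} (ha : 0 < a) (p : ℕ) : (a * p - 1) % p = p - 1 := by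
  rcases Nat.eq_zero_or_pos p with rfl | hp
  · simp
  obtain ⟨b, rfl⟩ := Nat.exists_eq_add_one_of_ne_zero ha.ne'
  rw [show (b + 1) * p - 1 = (p - 1) + p * b by
    rw [add_mul, one_mul, mul_comm]; omega]
  rw [Nat.add_mul_mod_self_left, Nat.mod_eq_of_lt (by omega)]

theorem mul_sub_one_div_self (a : ℕ) {p : ℕ} (hp : 0 < p) : (a * p - 1) / p = a - 1 := by
  rcases Nat.eq_zero_or_pos a with rfl | ha
  · simp
  obtain ⟨b, rfl⟩ := Nat.exists_eq_add_one_of_ne_zero ha.ne'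
  rw [show (b + 1) * p - 1 = (p - 1) + p * b by
    rw [add_mul, one_mul, mul_comm]; omega]
  rw [Nat.add_mul_div_left _ _ hp, Nat.div_eq_of_lt (by omega), zero_add, Nat.add_sub_cancel]

theorem choose_mul_pow_sub_one_modEq_one {p : ℕ} [Fact p.Prime] {a : ℕ} (ha : 0 < a) (i : ℕ) :
    (a * p ^ i - 1).choose (p ^ i - 1) ≡ 1 [MOD p] := by
  induction i with
  | zero => simp [Nat.ModEq.refl]
  | succ i ih =>
    have hp : 0 < p := (Fact.out : p.Prime).pos
    have hapi : 0 < a * p ^ i := Nat.mul_pos ha (Nat.pow_pos hp)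
    rw [pow_succ, ← mul_assoc]
    calc (a * p ^ i * p - 1).choose (p ^ i * p - 1)
        ≡ (p - 1).choose (p - 1) * (a * p ^ i - 1).choose (p ^ i - 1) [MOD p] := by
          simpa only [mul_sub_one_mod_self hapi, mul_sub_one_mod_self (Nat.pow_pos hp),
            mul_sub_one_div_self _ hp] using
            Choose.choose_modEq_choose_mod_mul_choose_div_nat (p := p)
              (n := a * p ^ i * p - 1) (k := p ^ i * p - 1)
      _ ≡ 1 * 1 [MOD p] := by rw [Nat.choose_self]; exact ih.mul_left 1

theorem uniformBell_pow_modEq_one {p : ℕ} [Fact p.Prime] (i j : ℕ) :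
    uniformBell j (p ^ i) ≡ 1 [MOD p] := by
  induction j with
  | zero => rw [uniformBell_zero_left]
  | succ j ih =>
    rw [uniformBell_succ_left, ← succ_mul]
    exact (choose_mul_pow_sub_one_modEq_one j.succ_pos i).mul ih

end Nat

/-- For any prime `p` and nonnegative integers `i, j`, the multinomial-type quantity
`(p^i·j)! / (j!·((p^i)!)^j)` is an integer (i.e. the denominator divides the numerator)
which is congruent to `1` modulo `p`. -/
theorem stmt0 (p i j : ℕ) (hp : p.Prime) :
    (Nat.factorial j * Nat.factorial (p ^ i) ^ j) ∣ Nat.factorial (p ^ i * j) ∧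
    Nat.factorial (p ^ i * j) / (Nat.factorial j * Nat.factorial (p ^ i) ^ j) ≡ 1 [MOD p] := by
  have : Fact p.Prime := ⟨hp⟩
  have hq : p ^ i ≠ 0 := (Nat.pow_pos hp.pos).ne'
  have hfact := Nat.uniformBell_mul_eq j hq
  rw [mul_comm (p ^ i), mul_comm j.factorial]
  refine ⟨⟨Nat.uniformBell j (p ^ i), by rw [← hfact]; ring⟩, ?_⟩
  rw [← Nat.uniformBell_eq_div j hq]
  exact Nat.uniformBell_pow_modEq_one i j
end

section
/- Let R be a commutative ring of characteristic p > 0, and let a ∈ R with a^p = 0. Then the R-linear map E(a·D) := ∑_{i=0}^{p-1} (a^i/i!)·D^i is a ring automorphism of any commutative R-algebra A on which D acts as an R-derivation, with inverse E(-a·D). -/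
open Finset

private lemma iterLeibniz {R A : Type*} [CommRing R] [CommRing A] [Algebra R A]
    (D : Derivation R A A) (n : ℕ) (x y : A) :
    (D.toLinearMap ^ n) (x * y)
      = ∑ k ∈ range (n + 1), n.choose k •
          ((D.toLinearMap ^ k) x * (D.toLinearMap ^ (n - k)) y) := by
  set u : ℕ → A := fun k => (D.toLinearMap ^ k) x with hu
  set v : ℕ → A := fun k => (D.toLinearMap ^ k) y with hv
  have hDu : ∀ k, D (u k) = u (k + 1) := by
    intro k; simp only [hu, pow_succ', Module.End.mul_apply]; rfl
  have hDv : ∀ k, D (v k) = v (k + 1) := by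
    intro k; simp only [hv, pow_succ', Module.End.mul_apply]; rfl
  induction n with
  | zero => simp [hu, hv]
  | succ n ih =>
    have hD : ∀ w z : A, D (w * z) = D w * z + w * D z := by
      intro w z; rw [D.leibniz, smul_eq_mul, smul_eq_mul]; ring
    have step : (D.toLinearMap ^ (n + 1)) (x * y)
        = ∑ k ∈ range (n + 1), n.choose k •
            (u (k + 1) * v (n - k) + u k * v (n - k + 1)) := by
      have : (D.toLinearMap ^ (n + 1)) (x * y) = D ((D.toLinearMap ^ n) (x * y)) := by
        rw [pow_succ', Module.End.mul_apply]; rfl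
      rw [this, ih, map_sum]
      refine sum_congr rfl fun k hk => ?_
      rw [map_nsmul, hD, hDu, hDv]
    rw [step]
    have hA : ∀ k ∈ range (n + 1), n.choose k • (u (k + 1) * v (n - k) + u k * v (n - k + 1))
        = n.choose k • (u (k + 1) * v (n + 1 - (k + 1))) + n.choose k • (u k * v (n + 1 - k)) := by
      intro k hk
      rw [mem_range] at hk
      have h1 : n + 1 - (k + 1) = n - k := by omega
      have h2 : n + 1 - k = n - k + 1 := by omega
      rw [h1, h2, smul_add]
    rw [sum_congr rfl hA, sum_add_distrib]
    have key : ∑ k ∈ range (n + 2), (n + 1).choose k • (u k * v (n + 1 - k))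
        = (∑ k ∈ range (n + 1), n.choose k • (u (k + 1) * v (n + 1 - (k + 1))))
          + ∑ k ∈ range (n + 1), n.choose k • (u k * v (n + 1 - k)) := by
      rw [Finset.sum_range_succ' (fun k => (n + 1).choose k • (u k * v (n + 1 - k))) (n + 1)]
      have h1 : ∀ k ∈ range (n + 1), (n + 1).choose (k + 1) • (u (k + 1) * v (n + 1 - (k + 1)))
          = n.choose k • (u (k + 1) * v (n + 1 - (k + 1)))
            + n.choose (k + 1) • (u (k + 1) * v (n + 1 - (k + 1))) := by
        intro k hk
        rw [Nat.choose_succ_succ, add_smul]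
      rw [sum_congr rfl h1, sum_add_distrib]
      have h2 : (∑ k ∈ range (n + 1), n.choose (k + 1) • (u (k + 1) * v (n + 1 - (k + 1))))
          + (n + 1).choose 0 • (u 0 * v (n + 1 - 0))
            = ∑ k ∈ range (n + 1), n.choose k • (u k * v (n + 1 - k)) := by
        have h4 := Finset.sum_range_succ' (fun k => n.choose k • (u k * v (n + 1 - k))) (n + 1)
        have h3 : ∑ k ∈ range (n + 1 + 1), n.choose k • (u k * v (n + 1 - k))
            = ∑ k ∈ range (n + 1), n.choose k • (u k * v (n + 1 - k)) := by
          rw [sum_range_succ, Nat.choose_succ_self, zero_smul, add_zero]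
        simp only [Nat.choose_zero_right] at h4 ⊢
        rw [← h4, h3]
      rw [add_assoc, h2]
    rw [key]

private lemma cauchyAux {M : Type*} [AddCommMonoid M] (n : ℕ) (f : ℕ → ℕ → M)
    (hf : ∀ i j, i < n → j < n → n ≤ i + j → f i j = 0) :
    ∑ i ∈ range n, ∑ j ∈ range n, f i j
      = ∑ m ∈ range n, ∑ i ∈ range (m + 1), f i (m - i) := by
  rw [Finset.sum_range_diag_flip n f]
  refine sum_congr rfl fun i hi => ?_
  rw [mem_range] at hi
  refine (Finset.sum_subset (Finset.range_subset_range.2 (Nat.sub_le n i)) ?_).symm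
  intro j hj hj'
  rw [mem_range] at hj
  rw [mem_range, not_lt] at hj'
  exact hf i j hi hj (by omega)

private lemma factInvMul (p : ℕ) (hp : p.Prime) {m i : ℕ} (hm : m < p) (him : i ≤ m) :
    (i.factorial : ZMod p)⁻¹ * ((m - i).factorial : ZMod p)⁻¹
      = (m.choose i : ZMod p) * (m.factorial : ZMod p)⁻¹ := by
  haveI := Fact.mk hp
  have h0 : ∀ k, k < p → ((k.factorial : ZMod p)) ≠ 0 := by
    intro k hk h
    rw [ZMod.natCast_eq_zero_iff] at h
    have := (Nat.Prime.dvd_factorial hp).1 h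
    omega
  have hi := h0 i (by omega)
  have hmi := h0 (m - i) (by omega)
  have hm' := h0 m hm
  have key : (m.factorial : ZMod p) = (m.choose i : ZMod p) * i.factorial * (m - i).factorial := by
    rw [← Nat.cast_mul, ← Nat.cast_mul, Nat.choose_mul_factorial_mul_factorial him]
  field_simp
  rw [key]; ring

private lemma altSum (R : Type*) [CommRing R] (m : ℕ) :
    ∑ i ∈ range (m + 1), ((-1 : R) ^ i * (m.choose i : R)) = if m = 0 then 1 else 0 := by
  have hZ := Int.alternating_sum_range_choose (n := m)
  have := congrArg (fun z : ℤ => (z : R)) hZ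
  push_cast at this
  simpa [apply_ite (fun z : ℤ => (z : R))] using this


/-- Let `R` be a commutative ring of characteristic `p > 0`, `A` a commutative `R`-algebra,
`D : A → A` an `R`-linear derivation and `a ∈ R` with `a^p = 0`.  Then the truncated
exponential `E(a·D) = ∑_{i=0}^{p-1} (a^i/i!)·D^i` is a ring automorphism of `A`
(indeed an `R`-algebra automorphism), with inverse `E(−a·D)`. -/
theorem stmt3 (p : ℕ) (hp : p.Prime) (R A : Type*) [CommRing R] [CommRing A] [Algebra R A]
    [CharP R p] (D : Derivation R A A) (a : R) (ha : a ^ p = 0) :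
    ∃ e : A ≃ₐ[R] A,
      (∀ x : A, e x = ∑ i ∈ Finset.range p,
          (a ^ i * ZMod.castHom (dvd_refl p) R ((i.factorial : ZMod p)⁻¹)) •
            (D.toLinearMap ^ i) x) ∧
      (∀ x : A, e.symm x = ∑ i ∈ Finset.range p,
          ((-a) ^ i * ZMod.castHom (dvd_refl p) R ((i.factorial : ZMod p)⁻¹)) •
            (D.toLinearMap ^ i) x) := by
  classical
  haveI := Fact.mk hp
  set K : ℕ → R := fun i => ZMod.castHom (dvd_refl p) R ((i.factorial : ZMod p)⁻¹) with hKdef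
  have hK0 : K 0 = 1 := by simp [hKdef]
  have hKmul : ∀ m i : ℕ, m < p → i ≤ m → K i * K (m - i) = (m.choose i : R) * K m := by
    intro m i hm him
    have hz := factInvMul p hp hm him
    calc K i * K (m - i)
        = ZMod.castHom (dvd_refl p) R
            ((i.factorial : ZMod p)⁻¹ * ((m - i).factorial : ZMod p)⁻¹) := (map_mul _ _ _).symm
      _ = ZMod.castHom (dvd_refl p) R ((m.choose i : ZMod p) * (m.factorial : ZMod p)⁻¹) := by
          rw [hz]
      _ = (m.choose i : R) * K m := by rw [map_mul, map_natCast]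
  set E : R → (A →ₗ[R] A) :=
    fun b => ∑ i ∈ Finset.range p, (b ^ i * K i) • (D.toLinearMap ^ i) with hEdef
  have hE : ∀ b x, E b x = ∑ i ∈ Finset.range p, (b ^ i * K i) • (D.toLinearMap ^ i) x := by
    intro b x
    rw [hEdef]
    simp [LinearMap.sum_apply, LinearMap.smul_apply]
  have hnil : ∀ b : R, b ^ p = 0 → ∀ n, p ≤ n → b ^ n = 0 := by
    intro b hb n hn
    calc b ^ n = b ^ p * b ^ (n - p) := by rw [← pow_add, Nat.add_sub_cancel' hn]
      _ = 0 := by rw [hb, zero_mul]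
  -- multiplicativity
  have hmulE : ∀ b : R, b ^ p = 0 → ∀ x y : A, E b (x * y) = E b x * E b y := by
    intro b hb x y
    have rhs : E b x * E b y
        = ∑ i ∈ range p, ∑ j ∈ range p,
            (b ^ (i + j) * (K i * K j)) • ((D.toLinearMap ^ i) x * (D.toLinearMap ^ j) y) := by
      rw [hE, hE, Finset.sum_mul_sum]
      refine sum_congr rfl fun i _ => sum_congr rfl fun j _ => ?_
      rw [smul_mul_smul_comm]
      congr 1
      rw [pow_add]; ring
    have hvan : ∀ i j, i < p → j < p → p ≤ i + j →
        (b ^ (i + j) * (K i * K j)) • ((D.toLinearMap ^ i) x * (D.toLinearMap ^ j) y) = 0 := by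
      intro i j _ _ hij
      rw [hnil b hb _ hij, zero_mul, zero_smul]
    rw [rhs, cauchyAux p _ hvan, hE]
    refine (sum_congr rfl fun m hm => ?_)
    rw [mem_range] at hm
    rw [iterLeibniz, smul_sum]
    refine sum_congr rfl fun i hi => ?_
    rw [mem_range, Nat.lt_succ_iff] at hi
    have h1 : i + (m - i) = m := by omega
    rw [h1, hKmul m i hm hi, ← Nat.cast_smul_eq_nsmul R, smul_smul]
    congr 1
    ring
  -- E b fixes elements killed by D
  have hone : ∀ b : R, ∀ z : A, D z = 0 → E b z = z := by
    intro b z hz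
    rw [hE]
    rw [Finset.sum_eq_single 0]
    · rw [pow_zero, one_mul, hK0, pow_zero]; simp
    · intro i _ hi
      obtain ⟨j, rfl⟩ := Nat.exists_eq_succ_of_ne_zero hi
      have : (D.toLinearMap ^ (j + 1)) z = (D.toLinearMap ^ j) (D z) := by
        rw [pow_succ, Module.End.mul_apply]; rfl
      rw [this, hz, map_zero, smul_zero]
    · intro h
      exact absurd (mem_range.2 hp.pos) h
  -- composition is the identity
  have hcomp : ∀ b c : R, b + c = 0 → b ^ p = 0 → ∀ x : A, E b (E c x) = x := by
    intro b c hbc hb x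
    have hc : c = -b := (neg_eq_of_add_eq_zero_right hbc).symm
    have key : E b (E c x)
        = ∑ j ∈ range p, ∑ i ∈ range p,
            ((c ^ j * K j) * (b ^ i * K i)) • (D.toLinearMap ^ (j + i)) x := by
      rw [hE c, map_sum]
      refine sum_congr rfl fun j _ => ?_
      rw [map_smul, hE b, smul_sum]
      refine sum_congr rfl fun i _ => ?_
      rw [smul_smul]
      congr 1
      rw [add_comm j i, pow_add, Module.End.mul_apply]
    have hvan : ∀ j i, j < p → i < p → p ≤ j + i →
        ((c ^ j * K j) * (b ^ i * K i)) • (D.toLinearMap ^ (j + i)) x = 0 := by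
      intro j i _ _ hji
      have : c ^ j * b ^ i = (-1 : R) ^ j * b ^ (j + i) := by
        rw [hc, neg_pow, pow_add]; ring
      have hz : (c ^ j * K j) * (b ^ i * K i) = 0 := by
        have : (c ^ j * K j) * (b ^ i * K i) = (c ^ j * b ^ i) * (K j * K i) := by ring
        rw [this]
        rw [hc, neg_pow, show (-1:R)^j * b^j * b^i = (-1:R)^j * b^(j+i) by rw [pow_add]; ring]
        rw [hnil b hb _ hji]
        ring
      rw [hz, zero_smul]
    rw [key, cauchyAux p _ hvan]
    have inner : ∀ m ∈ range p, ∑ j ∈ range (m + 1),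
        ((c ^ j * K j) * (b ^ (m - j) * K (m - j))) • (D.toLinearMap ^ (j + (m - j))) x
          = (if m = 0 then (1 : R) else 0) • (b ^ m * K m) • (D.toLinearMap ^ m) x := by
      intro m hm
      rw [mem_range] at hm
      have h1 : ∀ j ∈ range (m + 1),
          ((c ^ j * K j) * (b ^ (m - j) * K (m - j))) • (D.toLinearMap ^ (j + (m - j))) x
            = ((-1 : R) ^ j * (m.choose j : R)) • (b ^ m * K m) • (D.toLinearMap ^ m) x := by
        intro j hj
        rw [mem_range, Nat.lt_succ_iff] at hj
        have h2 : j + (m - j) = m := by omega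
        rw [h2, smul_smul]
        congr 1
        have h3 : c ^ j * b ^ (m - j) = (-1 : R) ^ j * b ^ m := by
          calc c ^ j * b ^ (m - j) = (-1 : R) ^ j * (b ^ j * b ^ (m - j)) := by
                rw [hc, neg_pow]; ring
            _ = (-1 : R) ^ j * b ^ m := by
                rw [← pow_add, show j + (m - j) = m by omega]
        calc (c ^ j * K j) * (b ^ (m - j) * K (m - j))
            = (c ^ j * b ^ (m - j)) * (K j * K (m - j)) := by ring
          _ = ((-1 : R) ^ j * b ^ m) * ((m.choose j : R) * K m) := by
              rw [h3, hKmul m j hm hj]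
          _ = (-1 : R) ^ j * (m.choose j : R) * (b ^ m * K m) := by ring
      rw [sum_congr rfl h1, ← sum_smul, altSum R m]
    rw [sum_congr rfl inner]
    rw [Finset.sum_eq_single 0]
    · simp [hK0]
    · intro m _ hm
      rw [if_neg hm, zero_smul]
    · intro h
      exact absurd (mem_range.2 hp.pos) h
  -- assemble the algebra equivalence
  have hna : (-a) ^ p = 0 := by
    rw [neg_pow, ha, mul_zero]
  let F : A →ₐ[R] A :=
    { toFun := E a
      map_one' := hone a 1 D.map_one_eq_zero
      map_mul' := hmulE a ha
      map_zero' := map_zero (E a)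
      map_add' := map_add (E a)
      commutes' := fun r => hone a _ (D.map_algebraMap r) }
  let G : A →ₐ[R] A :=
    { toFun := E (-a)
      map_one' := hone (-a) 1 D.map_one_eq_zero
      map_mul' := hmulE (-a) hna
      map_zero' := map_zero (E (-a))
      map_add' := map_add (E (-a))
      commutes' := fun r => hone (-a) _ (D.map_algebraMap r) }
  refine ⟨AlgEquiv.ofAlgHom F G (AlgHom.ext fun x => ?_) (AlgHom.ext fun x => ?_),
    fun x => ?_, fun x => ?_⟩
  · show F (G x) = x
    exact hcomp a (-a) (by ring) ha x
  · show G (F x) = x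
    exact hcomp (-a) a (by ring) hna x
  · show E a x = _
    exact hE a x
  · show E (-a) x = _
    exact hE (-a) x
end
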